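/- arXiv:1905.04556 — 2 statements merged into one kernel-verified Lean document; each statement's English description precedes it below -/
import Mathlib

section
/- For the Jensen–Shannon generator f(t) = -(t+1) * log((1+t)/2) + t * log t on (0, ∞), the ratio f'''(t)/f''(t)² equals -(2t + 1) for all t > 0. -/
open Set Real

lemma eqOn_deriv_of_hasDerivAt {𝕜 F : Type*} [NontriviallyNormedField 𝕜]
    [NormedAddCommGroup F] [NormedSpace 𝕜 F] {f g g' : 𝕜 → F} {s : Set 𝕜} (hs : IsOpen s)
    (hfg : EqOn f g s) (hg : ∀ x ∈ s, HasDerivAt g (g' x) x) : EqOn (deriv f) g' s :=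
  fun x hx => (hfg.deriv hs hx).trans (hg x hx).deriv

lemma hasDerivAt_half_one_add (t : ℝ) : HasDerivAt (fun s : ℝ => (1 + s) / 2) (1 / 2) t := by
  simpa using ((hasDerivAt_id' t).const_add 1).div_const 2

lemma hasDerivAt_jensenShannon_generator {t : ℝ} (ht : 0 < t) :
    HasDerivAt (fun s => -(s + 1) * log ((1 + s) / 2) + s * log s)
      (log t - log ((1 + t) / 2)) t := by
  refine ((((hasDerivAt_id' t).add_const 1).neg.mul
    ((hasDerivAt_half_one_add t).log (by positivity))).add
      ((hasDerivAt_id' t).mul (hasDerivAt_log ht.ne'))).congr_deriv ?_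
  simp only [Pi.neg_apply]
  field_simp
  ring

lemma hasDerivAt_log_sub_log_half_one_add {t : ℝ} (ht : 0 < t) :
    HasDerivAt (fun s => log s - log ((1 + s) / 2)) (t⁻¹ - (1 + t)⁻¹) t := by
  refine ((hasDerivAt_log ht.ne').sub
    ((hasDerivAt_half_one_add t).log (by positivity))).congr_deriv ?_
  field_simp

lemma hasDerivAt_inv_sub_inv_one_add {t : ℝ} (ht : 0 < t) :
    HasDerivAt (fun s => s⁻¹ - (1 + s)⁻¹) (-(t ^ 2)⁻¹ + ((1 + t) ^ 2)⁻¹) t := by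
  refine ((hasDerivAt_inv ht.ne').sub
    (((hasDerivAt_id' t).const_add 1).inv (by positivity))).congr_deriv ?_
  ring

lemma inv_add_inv_sq_div_inv_sub_inv_sq {t : ℝ} (ht : 0 < t) :
    (-(t ^ 2)⁻¹ + ((1 + t) ^ 2)⁻¹) / (t⁻¹ - (1 + t)⁻¹) ^ 2 = -(2 * t + 1) := by
  rw [inv_sub_inv ht.ne' (by positivity)]
  field_simp
  ring

theorem stmt_5 (f : ℝ → ℝ)
    (hf : ∀ t > (0:ℝ), f t = -(t + 1) * Real.log ((1 + t) / 2) + t * Real.log t) :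
    ∀ t > (0:ℝ), deriv (deriv (deriv f)) t / (deriv (deriv f) t) ^ 2 = -(2 * t + 1) := by
  have h1 : EqOn (deriv f) (fun t => log t - log ((1 + t) / 2)) (Ioi 0) :=
    eqOn_deriv_of_hasDerivAt isOpen_Ioi hf fun _ ht => hasDerivAt_jensenShannon_generator ht
  have h2 : EqOn (deriv (deriv f)) (fun t => t⁻¹ - (1 + t)⁻¹) (Ioi 0) :=
    eqOn_deriv_of_hasDerivAt isOpen_Ioi h1 fun _ ht => hasDerivAt_log_sub_log_half_one_add ht
  have h3 : EqOn (deriv (deriv (deriv f))) (fun t => -(t ^ 2)⁻¹ + ((1 + t) ^ 2)⁻¹) (Ioi 0) :=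
    eqOn_deriv_of_hasDerivAt isOpen_Ioi h2 fun _ ht => hasDerivAt_inv_sub_inv_one_add ht
  intro t ht
  rw [h3 ht, h2 ht]
  exact inv_add_inv_sq_div_inv_sub_inv_sq ht
end

section
/- For each fixed γ ∈ [0, 1], the function F : ℝ × (0, ∞) → ℝ given by F(m, ρ) = m² / ρ^γ is convex on ℝ × (0, ∞) (as a subset of ℝ²). -/
lemma pos_or_pos (a b : ℝ) (ha : 0 ≤ a) (hab : a + b = 1) : 0 < a ∨ 0 < b := by
  rcases eq_or_lt_of_le ha with h | h
  · right; linarith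
  · left; exact h

/-- Joint convexity inequality for `m^2 / r` (Cauchy–Schwarz form). -/
lemma sq_div_ineq (m n r s a b : ℝ) (hr : 0 < r) (hs : 0 < s)
    (ha : 0 ≤ a) (hb : 0 ≤ b) (hab : a + b = 1) :
    (a * m + b * n) ^ 2 / (a * r + b * s) ≤ a * (m ^ 2 / r) + b * (n ^ 2 / s) := by
  have hd : 0 < a * r + b * s := by
    rcases pos_or_pos a b ha hab with h | h
    · nlinarith
    · nlinarith
  rw [div_le_iff₀ hd, ← mul_div_assoc, ← mul_div_assoc,
    div_add_div _ _ hr.ne' hs.ne', div_mul_eq_mul_div,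
    le_div_iff₀ (by positivity)]
  nlinarith [mul_nonneg (mul_nonneg ha hb) (sq_nonneg (n * r - m * s))]

theorem stmt_10 (γ : ℝ) (hγ0 : 0 ≤ γ) (hγ1 : γ ≤ 1) :
    ConvexOn ℝ ((Set.univ : Set ℝ) ×ˢ Set.Ioi (0:ℝ))
      (fun p : ℝ × ℝ => p.1 ^ 2 / p.2 ^ γ) := by
  constructor
  · exact convex_univ.prod (convex_Ioi 0)
  rintro ⟨m, ρ⟩ ⟨-, hρ⟩ ⟨n, σ⟩ ⟨-, hσ⟩ a b ha hb hab
  simp only [Set.mem_Ioi] at hρ hσ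
  simp only [Prod.smul_mk, Prod.mk_add_mk, smul_eq_mul]
  have hργ : (0:ℝ) < ρ ^ γ := Real.rpow_pos_of_pos hρ γ
  have hσγ : (0:ℝ) < σ ^ γ := Real.rpow_pos_of_pos hσ γ
  have hconc : a * ρ ^ γ + b * σ ^ γ ≤ (a * ρ + b * σ) ^ γ := by
    have := (Real.concaveOn_rpow hγ0 hγ1).2 (Set.mem_Ici.2 hρ.le)
      (Set.mem_Ici.2 hσ.le) ha hb hab
    simpa using this
  have hd1 : (0:ℝ) < a * ρ ^ γ + b * σ ^ γ := by
    rcases pos_or_pos a b ha hab with h | h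
    · nlinarith
    · nlinarith
  have step1 : (a * m + b * n) ^ 2 / (a * ρ + b * σ) ^ γ
      ≤ (a * m + b * n) ^ 2 / (a * ρ ^ γ + b * σ ^ γ) :=
    div_le_div_of_nonneg_left (by positivity) hd1 hconc
  have step2 := sq_div_ineq m n (ρ ^ γ) (σ ^ γ) a b hργ hσγ ha hb hab
  exact step1.trans step2
end
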